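/- arXiv:1401.0231 — 4 statements merged into one kernel-verified Lean document; each statement's English description precedes it below -/
import Mathlib

section
/- Let d ≥ 1, k ∈ {1,...,d-1}, and 0 < α < 1. Suppose E ⊂ ℝ^d is a set such that for every x ∈ E there exist a (d-k)-dimensional linear subspace V of ℝ^d, a unit vector θ ∈ S^{d-1}, and r > 0 with E ∩ X(x,r,V,α) \ H(x,θ,α) = ∅, where X(x,r,V,α) = { y ∈ B(x,r) : dist(y-x,V) < α|y-x| } and H(x,θ,α) = { y ∈ ℝ^d : (y-x)·θ ≥ α|y-x| }, and where V, θ, α, r are the same for all x ∈ E. Then E is contained in the image of a single Lipschitz map from a subset of the orthogonal complement V^⊥ (a k-dimensional subspace) into ℝ^d; in particular E is covered by countably many Lipschitz images of ℝ^k. -/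
open MeasureTheory Metric Set
open scoped ENNReal NNReal RealInnerProductSpace

noncomputable section

/-- The open cone `X(x,r,V,α) = {y ∈ B(x,r) : dist(y-x,V) < α|y-x|}`. -/
def coneX (d : ℕ) (x : EuclideanSpace ℝ (Fin d)) (r : ℝ)
    (V : Submodule ℝ (EuclideanSpace ℝ (Fin d))) (α : ℝ) : Set (EuclideanSpace ℝ (Fin d)) :=
  {y | y ∈ Metric.ball x r ∧ Metric.infDist (y - x) (V : Set (EuclideanSpace ℝ (Fin d))) < α * ‖y - x‖}

/-- The closed cone `H(x,θ,α) = {y : (y-x)·θ ≥ α|y-x|}`. -/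
def coneH (d : ℕ) (x θ : EuclideanSpace ℝ (Fin d)) (α : ℝ) : Set (EuclideanSpace ℝ (Fin d)) :=
  {y | α * ‖y - x‖ ≤ ⟪y - x, θ⟫}

/-!
Let `P` be the orthogonal projection onto `Vᗮ`. If `x, y ∈ E` are closer than `r` and
`‖P (x - y)‖ < α ‖x - y‖`, then each of `x, y` lies in the cone `X` at the other, hence in the
cone `H` at the other, so `⟪x - y, θ⟫` and `⟪y - x, θ⟫` are both at least `α ‖x - y‖ > 0`, which
is absurd. Thus `‖x - y‖ ≤ α⁻¹ ‖P x - P y‖` on each of countably many balls of radius `r / 2`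
covering `E`. Translating the projection of the `n`-th piece far along a unit vector of `Vᗮ`
separates the pieces enough that the inverse of the combined map is Lipschitz on its whole image.
Extending it to all of `Vᗮ ≃ ℝ^k` gives the covering by Lipschitz images of `ℝ^k`.
-/

theorem exists_lipschitzOnWith_comp_eq_of_dist_le {ι X F : Type*} [PseudoMetricSpace F]
    [MetricSpace X] [Nonempty X] {g : ι → X} {φ : ι → F} {K : ℝ≥0}
    (h : ∀ i j, dist (g i) (g j) ≤ K * dist (φ i) (φ j)) :
    ∃ f : F → X, LipschitzOnWith K f (range φ) ∧ f ∘ φ = g := by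
  have hg : g.FactorsThrough φ := fun i j hij =>
    dist_le_zero.1 <| by simpa [hij] using h i j
  refine ⟨Function.extend φ g fun _ => Classical.arbitrary X,
    LipschitzOnWith.of_dist_le_mul ?_, funext (hg.extend_apply _)⟩
  rintro _ ⟨i, rfl⟩ _ ⟨j, rfl⟩
  simpa only [hg.extend_apply] using h i j

theorem exists_add_le_sub_of_lt (a : ℕ → ℝ) :
    ∃ T : ℕ → ℝ, ∀ n m, n < m → a n + a m ≤ T m - T n := by
  refine ⟨fun m => ∑ i ∈ Finset.range m, (|a i| + |a (i + 1)|), fun n m hnm => ?_⟩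
  induction m, hnm using Nat.le_induction with
  | base =>
    simp only [Finset.sum_range_succ, add_sub_cancel_left]
    exact add_le_add (le_abs_self _) (le_abs_self _)
  | succ m _ ih =>
    simp only [Finset.sum_range_succ] at ih ⊢
    linarith [neg_le_abs (a m), le_abs_self (a (m + 1))]

theorem Submodule.infDist_eq_norm_orthogonalProjectionOnto_orthogonal {E : Type*}
    [NormedAddCommGroup E] [InnerProductSpace ℝ E] (K : Submodule ℝ E)
    [K.HasOrthogonalProjection] (z : E) :
    infDist z K = ‖Kᗮ.orthogonalProjectionOnto z‖ := by
  change _ = ‖Kᗮ.starProjection z‖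
  rw [starProjection_orthogonal_val, starProjection_minimal, infDist_eq_iInf]
  simp only [dist_eq_norm]
  rfl

theorem exists_lipschitzOnWith_iUnion_subset_image {X F : Type*} [MetricSpace X] [Nonempty X]
    [NormedAddCommGroup F] [NormedSpace ℝ F] [Nontrivial F] (S : ℕ → Set X) (p : ℕ → X → F)
    (K : ℝ≥0) (hS : ∀ n, Bornology.IsBounded (S n)) (hp : ∀ n, Bornology.IsBounded (p n '' S n))
    (hK : ∀ n, ∀ x ∈ S n, ∀ y ∈ S n, dist x y ≤ K * dist (p n x) (p n y)) :
    ∃ (f : F → X) (s : Set F), LipschitzOnWith (max K 1) f s ∧ ⋃ n, S n ⊆ f '' s := by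
  obtain ⟨x₀⟩ := ‹Nonempty X›
  choose a ha using fun n => (hS n).subset_closedBall x₀
  choose b hb using fun n => (hp n).subset_closedBall 0
  obtain ⟨T, hT⟩ := exists_add_le_sub_of_lt fun n => a n + b n
  obtain ⟨e, he⟩ := exists_norm_eq F zero_le_one
  let φ : (Σ n, S n) → F := fun i => p i.1 i.2 + T i.1 • e
  have cross : ∀ i j : Σ n, S n, i.1 < j.1 → dist (i.2 : X) j.2 ≤ dist (φ i) (φ j) := by
    rintro ⟨n, x, hx⟩ ⟨m, y, hy⟩ (hnm : n < m)
    have hx₀ := mem_closedBall.1 (ha n hx)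
    have hy₀ := mem_closedBall.1 (ha m hy)
    have hpx := mem_closedBall_zero_iff.1 (hb n (mem_image_of_mem _ hx))
    have hpy := mem_closedBall_zero_iff.1 (hb m (mem_image_of_mem _ hy))
    have hTe : T m - T n ≤ ‖(T m - T n) • e‖ := by
      rw [norm_smul, he, mul_one]
      exact Real.le_norm_self _
    calc dist x y ≤ a n + a m := (dist_triangle_right x y x₀).trans (add_le_add hx₀ hy₀)
      _ ≤ ‖(T m - T n) • e‖ - ‖p n x - p m y‖ := by
        linarith [hT n m hnm, norm_sub_le (p n x) (p m y)]
      _ ≤ ‖(T m - T n) • e - (p n x - p m y)‖ := norm_sub_norm_le _ _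
      _ = dist (φ ⟨n, x, hx⟩) (φ ⟨m, y, hy⟩) := by
        rw [dist_comm, dist_eq_norm, sub_smul]
        congr 1
        simp only [φ]
        abel
  have hφ : ∀ i j : Σ n, S n, dist (i.2 : X) j.2 ≤ max K 1 * dist (φ i) (φ j) := by
    rintro ⟨n, x, hx⟩ ⟨m, y, hy⟩
    rcases lt_trichotomy n m with hnm | rfl | hmn
    · exact (cross _ _ hnm).trans (le_mul_of_one_le_left dist_nonneg (by simp))
    · calc dist x y ≤ K * dist (p n x) (p n y) := hK n x hx y hy
        _ ≤ max K 1 * dist (φ ⟨n, x, hx⟩) (φ ⟨n, y, hy⟩) := by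
          rw [dist_add_right]
          gcongr
          exact_mod_cast le_max_left K 1
    · rw [dist_comm, dist_comm (φ _)]
      exact (cross _ _ hmn).trans (le_mul_of_one_le_left dist_nonneg (by simp))
  obtain ⟨f, hf, hfφ⟩ := exists_lipschitzOnWith_comp_eq_of_dist_le hφ
  refine ⟨f, range φ, hf, ?_⟩
  rintro x ⟨-, ⟨n, rfl⟩, hx⟩
  exact ⟨φ ⟨n, x, hx⟩, mem_range_self _, congrFun hfφ ⟨n, x, hx⟩⟩

theorem mul_norm_sub_le_norm_orthogonalProjectionOnto_sub {d : ℕ}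
    {E : Set (EuclideanSpace ℝ (Fin d))} {V : Submodule ℝ (EuclideanSpace ℝ (Fin d))}
    {θ : EuclideanSpace ℝ (Fin d)} {α r : ℝ}
    (hE : ∀ x ∈ E, E ∩ (coneX d x r V α \ coneH d x θ α) = ∅)
    {x y : EuclideanSpace ℝ (Fin d)} (hx : x ∈ E) (hy : y ∈ E) (hxy : dist x y < r) :
    α * ‖x - y‖ ≤ ‖Vᗮ.orthogonalProjectionOnto (x - y)‖ := by
  by_contra! hlt
  have mem_coneH : ∀ a ∈ E, ∀ b ∈ E, dist a b < r →
      ‖Vᗮ.orthogonalProjectionOnto (a - b)‖ < α * ‖a - b‖ → α * ‖a - b‖ ≤ ⟪a - b, θ⟫ := by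
    intro a ha b hb hab hproj
    by_contra hH
    refine (eq_empty_iff_forall_notMem.1 (hE b hb)) a ⟨ha, ⟨?_, ?_⟩, hH⟩
    · rwa [mem_ball]
    · rwa [V.infDist_eq_norm_orthogonalProjectionOnto_orthogonal]
  have hxyθ := mem_coneH x hx y hy hxy hlt
  have hyxθ := mem_coneH y hy x hx (dist_comm x y ▸ hxy) (by
    rwa [← neg_sub, map_neg, norm_neg, norm_neg])
  rw [← neg_sub, norm_neg, inner_neg_left] at hyxθ
  linarith [norm_nonneg (Vᗮ.orthogonalProjectionOnto (x - y))]

theorem exists_lipschitzOnWith_orthogonal_subset_image {d : ℕ} {E : Set (EuclideanSpace ℝ (Fin d))}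
    {V : Submodule ℝ (EuclideanSpace ℝ (Fin d))} [Nontrivial Vᗮ] {θ : EuclideanSpace ℝ (Fin d)}
    {α r : ℝ} (hα : 0 < α) (hr : 0 < r)
    (hE : ∀ x ∈ E, E ∩ (coneX d x r V α \ coneH d x θ α) = ∅) :
    ∃ (K : ℝ≥0) (f : Vᗮ → EuclideanSpace ℝ (Fin d)) (s : Set Vᗮ),
      LipschitzOnWith K f s ∧ E ⊆ f '' s := by
  obtain ⟨c, hc⟩ := TopologicalSpace.exists_dense_seq (EuclideanSpace ℝ (Fin d))
  let P := Vᗮ.orthogonalProjectionOnto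
  have hP : ∀ n, ∀ x ∈ E ∩ ball (c n) (r / 2), ∀ y ∈ E ∩ ball (c n) (r / 2),
      dist x y ≤ (α.toNNReal)⁻¹ * dist (P x) (P y) := by
    intro n x ⟨hx, hxc⟩ y ⟨hy, hyc⟩
    have hxy : dist x y < r := by
      linarith [dist_triangle_right x y (c n), mem_ball.1 hxc, mem_ball.1 hyc]
    have key := mul_norm_sub_le_norm_orthogonalProjectionOnto_sub hE hx hy hxy
    rw [NNReal.coe_inv, Real.coe_toNNReal _ hα.le, dist_eq_norm, dist_eq_norm, ← map_sub,
      inv_mul_eq_div, le_div_iff₀' hα]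
    exact key
  obtain ⟨f, s, hf, hfs⟩ := exists_lipschitzOnWith_iUnion_subset_image
    (fun n => E ∩ ball (c n) (r / 2)) (fun _ => P) _
    (fun _ => isBounded_ball.subset inter_subset_right)
    (fun _ => P.lipschitz.isBounded_image (isBounded_ball.subset inter_subset_right)) hP
  refine ⟨_, f, s, hf, fun x hx => hfs ?_⟩
  obtain ⟨n, hn⟩ := hc.exists_dist_lt x (half_pos hr)
  exact mem_iUnion.2 ⟨n, hx, hn⟩

theorem exists_lipschitzWith_euclideanSpace_image_subset_range {W F : Type*} [NormedAddCommGroup W]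
    [NormedSpace ℝ W] [FiniteDimensional ℝ W] [NormedAddCommGroup F] [NormedSpace ℝ F]
    [FiniteDimensional ℝ F] {k : ℕ} (hW : Module.finrank ℝ W = k) {f : W → F} {s : Set W}
    {K : ℝ≥0} (hf : LipschitzOnWith K f s) :
    ∃ (g : EuclideanSpace ℝ (Fin k) → F) (K' : ℝ≥0), LipschitzWith K' g ∧ f '' s ⊆ range g := by
  obtain ⟨G, hG, hfG⟩ := hf.extend_finite_dimension
  let A : EuclideanSpace ℝ (Fin k) ≃L[ℝ] W :=
    ContinuousLinearEquiv.ofFinrankEq (by rw [finrank_euclideanSpace_fin, hW])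
  refine ⟨G ∘ A, _, hG.comp A.lipschitz, ?_⟩
  rintro _ ⟨u, hu, rfl⟩
  exact ⟨A.symm u, by simp [hfG hu]⟩

theorem rectifiability_criterion_general (d k : ℕ) (hk1 : 1 ≤ k) (hk2 : k ≤ d - 1)
    (α : ℝ) (hα0 : 0 < α)
    (E : Set (EuclideanSpace ℝ (Fin d)))
    (V : Submodule ℝ (EuclideanSpace ℝ (Fin d))) (hV : Module.finrank ℝ V = d - k)
    (θ : EuclideanSpace ℝ (Fin d)) (r : ℝ) (hr : 0 < r)
    (hE : ∀ x ∈ E, E ∩ (coneX d x r V α \ coneH d x θ α) = ∅) :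
    (∃ (K : ℝ≥0) (f : Vᗮ → EuclideanSpace ℝ (Fin d)) (s : Set Vᗮ),
      LipschitzOnWith K f s ∧ E ⊆ f '' s) ∧
    ∃ g : ℕ → (EuclideanSpace ℝ (Fin k) → EuclideanSpace ℝ (Fin d)),
      (∀ n, ∃ K : ℝ≥0, LipschitzWith K (g n)) ∧ E ⊆ ⋃ n, Set.range (g n) := by
  have hVk : Module.finrank ℝ Vᗮ = k := by
    have := V.finrank_add_finrank_orthogonal
    rw [hV, finrank_euclideanSpace_fin] at this
    omega
  have : Nontrivial Vᗮ := Module.finrank_pos_iff (R := ℝ) |>.1 (by omega)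
  obtain ⟨K, f, s, hf, hEf⟩ := exists_lipschitzOnWith_orthogonal_subset_image hα0 hr hE
  obtain ⟨g, K', hg, hfg⟩ := exists_lipschitzWith_euclideanSpace_image_subset_range hVk hf
  exact ⟨⟨K, f, s, hf, hEf⟩, fun _ => g, fun _ => ⟨K', hg⟩,
    fun x hx => mem_iUnion.2 ⟨0, hfg (hEf hx)⟩⟩

/-- Rectifiability criterion: if the cone `X(x,r,V,α) \ H(x,θ,α)` misses `E` for every `x ∈ E`
(with the same `V`, `θ`, `α`, `r` for all `x`), then `E` is the image of a single Lipschitz map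
defined on a subset of the `k`-dimensional subspace `Vᗮ`; in particular `E` is covered by
countably many Lipschitz images of `ℝ^k`, i.e. `E` is strongly `k`-rectifiable. -/
theorem rectifiability_criterion (d k : ℕ) (hd : 1 ≤ d) (hk1 : 1 ≤ k) (hk2 : k ≤ d - 1)
    (α : ℝ) (hα0 : 0 < α) (hα1 : α < 1)
    (E : Set (EuclideanSpace ℝ (Fin d)))
    (V : Submodule ℝ (EuclideanSpace ℝ (Fin d))) (hV : Module.finrank ℝ V = d - k)
    (θ : EuclideanSpace ℝ (Fin d)) (hθ : ‖θ‖ = 1) (r : ℝ) (hr : 0 < r)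
    (hE : ∀ x ∈ E, E ∩ (coneX d x r V α \ coneH d x θ α) = ∅) :
    (∃ (K : ℝ≥0) (f : Vᗮ → EuclideanSpace ℝ (Fin d)) (s : Set Vᗮ),
      LipschitzOnWith K f s ∧ E ⊆ f '' s) ∧
    ∃ g : ℕ → (EuclideanSpace ℝ (Fin k) → EuclideanSpace ℝ (Fin d)),
      (∀ n, ∃ K : ℝ≥0, LipschitzWith K (g n)) ∧ E ⊆ ⋃ n, Set.range (g n) :=
  rectifiability_criterion_general d k hk1 hk2 α hα0 E V hV θ r hr hE
end
end

section
/- Fix d ≥ 1, k ∈ {1,...,d-1}, 0 < α ≤ 1, and ε ≥ 0. The set A_ε of Borel probability measures ν on the closed unit ball B̄(0,1) ⊂ ℝ^d such that there exist a (d-k)-dimensional linear subspace V and a unit vector θ with ν(X(0,1,V,α) \ H(0,θ,α)) ≤ ε, is closed with respect to weak convergence of measures. -/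
open MeasureTheory Metric Set
open scoped ENNReal NNReal RealInnerProductSpace

noncomputable section

/-! Parametrise `(V, θ)` by an orthonormal frame of `V` together with `θ`. These parameters form a
compact space `K`, and since `dist(y, V)` is the norm of the residual of `y` after projecting onto
the frame, the cones `X(0,1,V,α) \ H(0,θ,α)` are the sections `U_q` of one open set
`U ⊆ K × B̄(0,1)`. For any open `U`, the pairs `(q, ν)` with `ν(U_q) ≤ ε` form a closed set: if
`ν(U_q) > ε`, inner regularity gives a closed, hence compact, `F ⊆ U_q` with `ν(F) > ε`, the tube
lemma thickens `{q} × F` to an open box `u × v ⊆ U`, and by the portmanteau inequality every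
measure near `ν` still gives the open set `v` mass `> ε`. The set `A_ε` is the projection of this
closed set along the compact factor `K`, hence closed. -/

open Filter Topology

namespace MeasureTheory.ProbabilityMeasure

theorem isOpen_setOf_lt_measure {X : Type*} [TopologicalSpace X]
    [MeasurableSpace X] [OpensMeasurableSpace X] [HasOuterApproxClosed X] {G : Set X}
    (hG : IsOpen G) (c : ℝ≥0∞) : IsOpen {ν : ProbabilityMeasure X | c < (ν : Measure X) G} :=
  isOpen_iff_mem_nhds.2 fun _ hν ↦ eventually_lt_of_lt_liminf
    (hν.trans_le (le_liminf_measure_open_of_tendsto tendsto_id hG))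

theorem isClosed_setOf_measure_prodMk_preimage_le {K X : Type*}
    [TopologicalSpace K] [TopologicalSpace X] [CompactSpace X]
    [TopologicalSpace.PseudoMetrizableSpace X] [MeasurableSpace X] [BorelSpace X]
    {U : Set (K × X)} (hU : IsOpen U) (c : ℝ≥0∞) :
    IsClosed {p : K × ProbabilityMeasure X | (p.2 : Measure X) (Prod.mk p.1 ⁻¹' U) ≤ c} := by
  simp_rw [← isOpen_compl_iff, isOpen_iff_mem_nhds, mem_compl_iff, mem_ofPred_eq, not_le]
  rintro ⟨k, ν⟩ hkν
  obtain ⟨F, hFU, hF, hcF⟩ := (hU.preimage (Continuous.prodMk_right k)).exists_lt_isClosed hkν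
  obtain ⟨u, v, hu, hv, hku, hFv, huvU⟩ := generalized_tube_lemma isCompact_singleton
    hF.isCompact hU (by rintro ⟨k', x⟩ ⟨rfl, hx⟩; exact hFU hx)
  have hν : {ν' : ProbabilityMeasure X | c < (ν' : Measure X) v} ∈ 𝓝 ν :=
    (isOpen_setOf_lt_measure hv c).mem_nhds (hcF.trans_le (measure_mono hFv))
  filter_upwards [prod_mem_nhds (hu.mem_nhds (hku rfl)) hν] with ⟨k', ν'⟩ ⟨hk', (hν' : c < _)⟩
  exact not_le.2 <| hν'.trans_le (measure_mono fun x hx ↦ huvU (mk_mem_prod hk' hx))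

end MeasureTheory.ProbabilityMeasure

section InnerProductSpace

variable {E : Type*} [NormedAddCommGroup E] [InnerProductSpace ℝ E]

theorem Orthonormal.infDist_span {ι : Type*} [Fintype ι] {f : ι → E} (hf : Orthonormal ℝ f)
    (y : E) : infDist y (Submodule.span ℝ (range f)) = ‖y - ∑ i, ⟪f i, y⟫ • f i‖ := by
  have hp : ∑ i, ⟪f i, y⟫ • f i ∈ Submodule.span ℝ (range f) :=
    Submodule.sum_mem _ fun i _ ↦ Submodule.smul_mem _ _ (Submodule.subset_span (mem_range_self i))
  simp_rw [infDist_eq_iInf, dist_eq_norm]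
  refine (((Submodule.span ℝ (range f)).norm_eq_iInf_iff_real_inner_eq_zero hp).2
    fun w hw ↦ ?_).symm
  induction hw using Submodule.span_induction with
  | mem _ hw =>
    obtain ⟨i, rfl⟩ := hw
    rw [inner_sub_left, hf.inner_left_fintype, conj_trivial, real_inner_comm, sub_self]
  | zero => exact inner_zero_right _
  | add _ _ _ _ h₁ h₂ => rw [inner_add_right, h₁, h₂, add_zero]
  | smul _ _ _ h => rw [inner_smul_right, h, mul_zero]

theorem isCompact_setOf_orthonormal (ι : Type*) [Fintype ι] [ProperSpace E] :
    IsCompact {f : ι → E | Orthonormal ℝ f} := by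
  classical
  refine (isCompact_univ_pi fun _ ↦ isCompact_sphere (0 : E) 1).of_isClosed_subset ?_
    fun f hf i _ ↦ by simp [hf.1 i]
  have : {f : ι → E | Orthonormal ℝ f} =
      ⋂ i, ⋂ j, {f | ⟪f i, f j⟫ = if i = j then 1 else 0} := by
    ext; simp [orthonormal_iff_ite]
  rw [this]
  exact isClosed_iInter fun i ↦ isClosed_iInter fun j ↦ isClosed_eq (by fun_prop) continuous_const

theorem exists_orthonormal_span_eq_of_finrank_eq [FiniteDimensional ℝ E] {V : Submodule ℝ E}
    {m : ℕ} (hV : Module.finrank ℝ V = m) :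
    ∃ f : Fin m → E, Orthonormal ℝ f ∧ Submodule.span ℝ (range f) = V := by
  subst hV
  let b := stdOrthonormalBasis ℝ V
  have hf : Orthonormal ℝ fun i ↦ (b i : E) := b.orthonormal.comp_linearIsometry V.subtypeₗᵢ
  refine ⟨_, hf, Submodule.eq_of_le_of_finrank_eq
    (Submodule.span_le.2 (range_subset_iff.2 fun i ↦ (b i).2)) ?_⟩
  rw [finrank_span_eq_card hf.linearIndependent, Fintype.card_fin]

end InnerProductSpace

theorem isOpen_setOf_mem_coneX_diff_coneH {d m : ℕ} {α : ℝ} {P : Type*} [TopologicalSpace P]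
    {f : P → Fin m → EuclideanSpace ℝ (Fin d)} {θ y : P → EuclideanSpace ℝ (Fin d)}
    (hf : Continuous f) (hθ : Continuous θ) (hy : Continuous y)
    (hfo : ∀ p, Orthonormal ℝ (f p)) :
    IsOpen {p | y p ∈ coneX d 0 1 (Submodule.span ℝ (range (f p))) α \ coneH d 0 (θ p) α} := by
  have : {p | y p ∈ coneX d 0 1 (Submodule.span ℝ (range (f p))) α \ coneH d 0 (θ p) α} =
      {p | ‖y p‖ < 1} ∩ {p | ‖y p - ∑ i, ⟪f p i, y p⟫ • f p i‖ < α * ‖y p‖} ∩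
        {p | ⟪y p, θ p⟫ < α * ‖y p‖} := by
    ext p
    simp [coneX, coneH, (hfo p).infDist_span]
  rw [this]
  exact ((isOpen_lt (by fun_prop) continuous_const).inter
    (isOpen_lt (by fun_prop) (by fun_prop))).inter (isOpen_lt (by fun_prop) (by fun_prop))

theorem coneMassLE_isClosed_general (d k : ℕ) (α : ℝ) (ε : ℝ) :
    IsClosed {ν : ProbabilityMeasure ↥(Metric.closedBall (0 : EuclideanSpace ℝ (Fin d)) 1) |
      ∃ (V : Submodule ℝ (EuclideanSpace ℝ (Fin d))) (θ : EuclideanSpace ℝ (Fin d)),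
        Module.finrank ℝ V = d - k ∧ ‖θ‖ = 1 ∧
        ν.toMeasure (Subtype.val ⁻¹' (coneX d 0 1 V α \ coneH d 0 θ α)) ≤ ENNReal.ofReal ε} := by
  have : CompactSpace {f : Fin (d - k) → EuclideanSpace ℝ (Fin d) // Orthonormal ℝ f} :=
    isCompact_iff_compactSpace.1 (isCompact_setOf_orthonormal _)
  let U : Set (({f : Fin (d - k) → EuclideanSpace ℝ (Fin d) // Orthonormal ℝ f} ×
      sphere (0 : EuclideanSpace ℝ (Fin d)) 1) × closedBall (0 : EuclideanSpace ℝ (Fin d)) 1) :=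
    {p | (p.2 : EuclideanSpace ℝ (Fin d)) ∈ coneX d 0 1 (Submodule.span ℝ (range p.1.1.1)) α \
      coneH d 0 p.1.2 α}
  have hU : IsOpen U := isOpen_setOf_mem_coneX_diff_coneH (by fun_prop) (by fun_prop)
    (by fun_prop) fun p ↦ p.1.1.2
  have hclosed := ProbabilityMeasure.isClosed_setOf_measure_prodMk_preimage_le hU (ENNReal.ofReal ε)
  convert isClosedMap_snd_of_compactSpace _ hclosed using 1
  ext ν
  constructor
  · rintro ⟨V, θ, hV, hθ, hν⟩
    obtain ⟨f, hf, rfl⟩ := exists_orthonormal_span_eq_of_finrank_eq hV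
    exact ⟨((⟨f, hf⟩, ⟨θ, mem_sphere_zero_iff_norm.2 hθ⟩), ν), hν, rfl⟩
  · rintro ⟨⟨⟨⟨f, hf⟩, θ⟩, ν⟩, hν, rfl⟩
    refine ⟨Submodule.span ℝ (range f), θ, ?_, norm_eq_of_mem_sphere θ, hν⟩
    rw [finrank_span_eq_card hf.linearIndependent, Fintype.card_fin]

/-- The set `A_ε` of probability measures on the closed unit ball having mass at most `ε`
in some cone `X(0,1,V,α) \ H(0,θ,α)` with `V ∈ G(d,d-k)` and `θ ∈ S^{d-1}` is closed
in the topology of weak convergence. -/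
theorem coneMassLE_isClosed (d k : ℕ) (hd : 1 ≤ d) (hk1 : 1 ≤ k) (hk2 : k ≤ d - 1)
    (α : ℝ) (hα0 : 0 < α) (hα1 : α ≤ 1) (ε : ℝ) (hε : 0 ≤ ε) :
    IsClosed {ν : ProbabilityMeasure ↥(Metric.closedBall (0 : EuclideanSpace ℝ (Fin d)) 1) |
      ∃ (V : Submodule ℝ (EuclideanSpace ℝ (Fin d))) (θ : EuclideanSpace ℝ (Fin d)),
        Module.finrank ℝ V = d - k ∧ ‖θ‖ = 1 ∧
        ν.toMeasure (Subtype.val ⁻¹' (coneX d 0 1 V α \ coneH d 0 θ α)) ≤ ENNReal.ofReal ε} :=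
  coneMassLE_isClosed_general d k α ε
end
end

section
/- Fix d ≥ 1 and 0 < α ≤ 1/2 and ε ≥ 0. The set A_ε of Borel probability measures ν on the closed unit ball B̄(0,1) ⊂ ℝ^d such that there exists y ∈ B̄(0,1-α) with ν(B(y,α)) ≤ ε (B(y,α) the open ball) is closed with respect to weak convergence. -/
/-!
The map `(ν, y) ↦ ν(B(y, r))` is lower semicontinuous: by continuity from below `ν(B(y, r))` is
nearly attained by a smaller ball `B(y, r')`, the portmanteau theorem keeps the mass of that open
ball from dropping for nearby `ν`, and `B(y, r') ⊆ B(y', r)` once `y'` is `(r - r')`-close to `y`.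
Hence its sublevel sets are closed, and projecting away the centre, which ranges over a compact
set, keeps them closed.
-/

open MeasureTheory Metric Set Filter Topology
open scoped ENNReal

namespace Metric

theorem iUnion_ball_sub_one_div {X : Type*} [PseudoMetricSpace X] (y : X) (r : ℝ) :
    ⋃ n : ℕ, ball y (r - 1 / (n + 1)) = ball y r := by
  ext x
  simp only [mem_iUnion, mem_ball]
  constructor
  · rintro ⟨n, hn⟩
    linarith [Nat.one_div_pos_of_nat (α := ℝ) (n := n)]
  · intro hx
    obtain ⟨n, hn⟩ := exists_nat_one_div_lt (sub_pos.2 hx)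
    exact ⟨n, by linarith⟩

end Metric

section

variable {Ω X : Type*} [MeasurableSpace Ω] [PseudoMetricSpace X]

theorem exists_lt_measure_preimage_ball_of_lt (μ : Measure Ω) (f : Ω → X) {y : X} {r : ℝ}
    {t : ℝ≥0∞} (ht : t < μ (f ⁻¹' ball y r)) : ∃ r' < r, t < μ (f ⁻¹' ball y r') := by
  have hmono : Monotone fun n : ℕ ↦ f ⁻¹' ball y (r - 1 / (n + 1)) := fun m n hmn ↦
    preimage_mono <| ball_subset_ball <| sub_le_sub_left (Nat.one_div_le_one_div hmn) r
  have hlim := tendsto_measure_iUnion_atTop (μ := μ) hmono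
  rw [← preimage_iUnion, iUnion_ball_sub_one_div] at hlim
  obtain ⟨n, hn⟩ := (hlim.eventually (lt_mem_nhds ht)).exists
  exact ⟨r - 1 / (n + 1), sub_lt_self r Nat.one_div_pos_of_nat, hn⟩

variable [TopologicalSpace Ω] [OpensMeasurableSpace Ω] [HasOuterApproxClosed Ω]

theorem lowerSemicontinuous_measure_preimage_ball {f : Ω → X} (hf : Continuous f) (r : ℝ) :
    LowerSemicontinuous fun p : ProbabilityMeasure Ω × X ↦
      (p.1 : Measure Ω) (f ⁻¹' ball p.2 r) := by
  rintro ⟨ν₀, y₀⟩ t ht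
  obtain ⟨r', hr', ht'⟩ := exists_lt_measure_preimage_ball_of_lt (ν₀ : Measure Ω) f ht
  have hopen : IsOpen (f ⁻¹' ball y₀ r') := isOpen_ball.preimage hf
  have hν : ∀ᶠ ν : ProbabilityMeasure Ω in 𝓝 ν₀, t < (ν : Measure Ω) (f ⁻¹' ball y₀ r') :=
    eventually_lt_of_lt_liminf <|
      ht'.trans_le (ProbabilityMeasure.le_liminf_measure_open_of_tendsto tendsto_id hopen)
  have hy : ∀ᶠ y in 𝓝 y₀, dist y y₀ < r - r' := ball_mem_nhds y₀ (sub_pos.2 hr')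
  filter_upwards [(continuous_fst.tendsto _).eventually hν,
    (continuous_snd.tendsto _).eventually hy] with p hpν hpy
  refine hpν.trans_le <| measure_mono <| preimage_mono <| ball_subset_ball' ?_
  rw [dist_comm]
  linarith

theorem isClosed_setOf_exists_measure_preimage_ball_le {f : Ω → X} (hf : Continuous f)
    {K : Set X} (hK : IsCompact K) (r : ℝ) (c : ℝ≥0∞) :
    IsClosed {ν : ProbabilityMeasure Ω | ∃ y ∈ K, (ν : Measure Ω) (f ⁻¹' ball y r) ≤ c} := by
  have : CompactSpace K := isCompact_iff_compactSpace.mp hK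
  have hclosed : IsClosed
      {p : ProbabilityMeasure Ω × K | (p.1 : Measure Ω) (f ⁻¹' ball (p.2 : X) r) ≤ c} :=
    ((lowerSemicontinuous_measure_preimage_ball hf r).comp
      (continuous_fst.prodMk (continuous_subtype_val.comp continuous_snd))).isClosed_preimage c
  convert isClosedMap_fst_of_compactSpace _ hclosed using 1
  ext ν
  simp

end

theorem porousHole_isClosed_general (d : ℕ)
    (α : ℝ) (ε : ℝ) :
    IsClosed {ν : ProbabilityMeasure ↥(Metric.closedBall (0 : EuclideanSpace ℝ (Fin d)) 1) |
      ∃ y ∈ Metric.closedBall (0 : EuclideanSpace ℝ (Fin d)) (1 - α),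
        ν.toMeasure (Subtype.val ⁻¹' Metric.ball y α) ≤ ENNReal.ofReal ε} :=
  isClosed_setOf_exists_measure_preimage_ball_le continuous_subtype_val
    (isCompact_closedBall _ _) α _

/-- The set `A_ε` of probability measures on the closed unit ball of `ℝ^d` having a hole:
an open ball `B(y,α)` with `y ∈ B̄(0,1-α)` of mass at most `ε`. This set is closed in the
topology of weak convergence. -/
theorem porousHole_isClosed (d : ℕ) (hd : 1 ≤ d)
    (α : ℝ) (hα0 : 0 < α) (hα1 : α ≤ 1/2) (ε : ℝ) (hε : 0 ≤ ε) :
    IsClosed {ν : ProbabilityMeasure ↥(Metric.closedBall (0 : EuclideanSpace ℝ (Fin d)) 1) |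
      ∃ y ∈ Metric.closedBall (0 : EuclideanSpace ℝ (Fin d)) (1 - α),
        ν.toMeasure (Subtype.val ⁻¹' Metric.ball y α) ≤ ENNReal.ofReal ε} :=
  porousHole_isClosed_general d α ε
end

section
/- Fix d ≥ 1, 0 < α,ϱ ≤ 1, c = (1+ϱ)^{-1}, and ε ≥ 0. The set A°_ε of Borel probability measures ν on the closed unit ball B̄(0,1) ⊂ ℝ^d such that there exists y in the closed annulus A(0,c,1) = B̄(0,1)\B(0,c) with ν(B(y, αϱ|y|)) ≤ ε, is closed with respect to weak convergence. -/
open MeasureTheory Metric Set Filter Topology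

/-!
The map `(y, ν) ↦ ν(B(y, αϱ|y|))` is jointly lower semicontinuous: for `s < αϱ|y₀|` the ball
`B(y₀, s)` lies in `B(y, αϱ|y|)` for all `y` near `y₀`, the portmanteau inequality for this open
ball gives lower semicontinuity in `ν`, and continuity from below lets `s` increase to `αϱ|y₀|`.
The set in question is the projection, along the compact annulus, of a closed sublevel set of
this map, hence closed.
-/

theorem IsCompact.isClosed_setOf_exists_le {X Y γ : Type*} [TopologicalSpace X]
    [TopologicalSpace Y] [LinearOrder γ] {K : Set X} (hK : IsCompact K) {g : X × Y → γ}
    (hg : LowerSemicontinuous g) (a : γ) :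
    IsClosed {y | ∃ x ∈ K, g (x, y) ≤ a} := by
  have := isCompact_iff_compactSpace.mp hK
  have hsub : LowerSemicontinuous fun p : K × Y ↦ g (p.1, p.2) :=
    hg.comp (continuous_subtype_val.prodMap continuous_id)
  convert isClosedMap_snd_of_compactSpace _ (hsub.isClosed_preimage a) using 1
  ext y
  simp

theorem measure_preimage_ball_eq_iSup_lt {Ω X : Type*} [MeasurableSpace Ω] [PseudoMetricSpace X]
    (μ : Measure Ω) (f : Ω → X) (x : X) (r : ℝ) :
    μ (f ⁻¹' ball x r) = ⨆ s : Iio r, μ (f ⁻¹' ball x s) := by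
  rw [← Monotone.measure_iUnion, ← preimage_iUnion, iUnion_subtype, ← biUnion_lt_ball x r]
  · rfl
  · exact fun s t hst ↦ preimage_mono (ball_subset_ball hst)

namespace MeasureTheory.ProbabilityMeasure

variable {Ω : Type*} [MeasurableSpace Ω] [TopologicalSpace Ω] [OpensMeasurableSpace Ω]
  [HasOuterApproxClosed Ω]

theorem lowerSemicontinuous_measure_of_isOpen {G : Set Ω} (hG : IsOpen G) :
    LowerSemicontinuous fun ν : ProbabilityMeasure Ω ↦ (ν : Measure Ω) G :=
  lowerSemicontinuous_iff_le_liminf.2 fun _ ↦ le_liminf_measure_open_of_tendsto tendsto_id hG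

theorem lowerSemicontinuous_measure_preimage_ball {X : Type*} [PseudoMetricSpace X]
    {f : Ω → X} (hf : Continuous f) {r : X → ℝ} (hr : LowerSemicontinuous r) :
    LowerSemicontinuous fun p : X × ProbabilityMeasure Ω ↦
      (p.2 : Measure Ω) (f ⁻¹' ball p.1 (r p.1)) := by
  rintro ⟨y₀, ν₀⟩ t (ht : t < (ν₀ : Measure Ω) (f ⁻¹' ball y₀ (r y₀)))
  rw [measure_preimage_ball_eq_iSup_lt, lt_iSup_iff] at ht
  obtain ⟨⟨s, hs⟩, hts⟩ := ht
  have hν : ∀ᶠ ν : ProbabilityMeasure Ω in 𝓝 ν₀, t < (ν : Measure Ω) (f ⁻¹' ball y₀ s) :=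
    lowerSemicontinuous_measure_of_isOpen (isOpen_ball.preimage hf) ν₀ t hts
  have hmargin : LowerSemicontinuous fun y ↦ r y + -dist y₀ y :=
    hr.add (continuous_const.dist continuous_id).neg.lowerSemicontinuous
  have hy : ∀ᶠ y in 𝓝 y₀, s < r y + -dist y₀ y := hmargin y₀ s (by simpa using hs)
  rw [nhds_prod_eq]
  filter_upwards [hy.prod_mk hν] with ⟨y, ν⟩ ⟨hsy, htν⟩
  exact htν.trans_le (measure_mono (preimage_mono (ball_subset_ball' (by linarith))))

end MeasureTheory.ProbabilityMeasure

theorem annularHole_isClosed_general (d : ℕ)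
    (α ϱ : ℝ) (ε : ℝ) :
    IsClosed {ν : ProbabilityMeasure ↥(Metric.closedBall (0 : EuclideanSpace ℝ (Fin d)) 1) |
      ∃ y ∈ Metric.closedBall (0 : EuclideanSpace ℝ (Fin d)) 1 \
            Metric.ball (0 : EuclideanSpace ℝ (Fin d)) (1 + ϱ)⁻¹,
        ν.toMeasure (Subtype.val ⁻¹' Metric.ball y (α * ϱ * ‖y‖)) ≤ ENNReal.ofReal ε} :=
  ((isCompact_closedBall 0 1).diff isOpen_ball).isClosed_setOf_exists_le
    (ProbabilityMeasure.lowerSemicontinuous_measure_preimage_ball continuous_subtype_val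
      (continuous_const.mul continuous_norm).lowerSemicontinuous) _

/-- The set `A°_ε` of probability measures on the closed unit ball of `ℝ^d` having an annular
hole: an open ball `B(y, αϱ|y|)` centered at a point `y` of the closed annulus
`A(0,c,1) = B̄(0,1) \ B(0,c)`, `c = (1+ϱ)⁻¹`, with mass at most `ε`. This set is closed
in the topology of weak convergence. -/
theorem annularHole_isClosed (d : ℕ) (hd : 1 ≤ d)
    (α ϱ : ℝ) (hα0 : 0 < α) (hα1 : α ≤ 1) (hϱ0 : 0 < ϱ) (hϱ1 : ϱ ≤ 1) (ε : ℝ) (hε : 0 ≤ ε) :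
    IsClosed {ν : ProbabilityMeasure ↥(Metric.closedBall (0 : EuclideanSpace ℝ (Fin d)) 1) |
      ∃ y ∈ Metric.closedBall (0 : EuclideanSpace ℝ (Fin d)) 1 \
            Metric.ball (0 : EuclideanSpace ℝ (Fin d)) (1 + ϱ)⁻¹,
        ν.toMeasure (Subtype.val ⁻¹' Metric.ball y (α * ϱ * ‖y‖)) ≤ ENNReal.ofReal ε} :=
  annularHole_isClosed_general d α ϱ ε
end
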